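/- arXiv:1304.6197 — 3 statements merged into one kernel-verified Lean document; each statement's English description precedes it below -/
import Mathlib

section
/- Let n ≥ 2 be an integer, θ ∈ (0, π/2) with n·θ ≤ 1, and define φ(k) = sin(kθ + (π - nθ)/2) / cos(nθ/2) for 0 ≤ k ≤ n. Then 1 ≤ φ(k) ≤ 1/cos(1/2) < √2 for all 0 ≤ k ≤ n, and φ(k) = φ(n-k). -/
/-! After the shift `kθ + (π - nθ)/2 = (kθ - nθ/2) + π/2`, the profile is
`φ k = cos (kθ - nθ/2) / cos (nθ/2)`, an even function of the offset `kθ - nθ/2`, which ranges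
over `[-nθ/2, nθ/2] ⊆ [-1/2, 1/2]`. Monotonicity of `cos` on `[0, π]` then gives both bounds, and
`1/2 < π/4` gives `cos (1/2) > cos (π/4) = 1/√2`. -/

open Real

theorem Real.sin_add_pi_sub_div_two (x y : ℝ) : sin (x + (π - y) / 2) = cos (x - y / 2) := by
  rw [← sin_add_pi_div_two]
  ring_nf

theorem Real.cos_le_cos_of_abs_le {x a : ℝ} (h : |x| ≤ a) (ha : a ≤ π) : cos a ≤ cos x :=
  cos_abs x ▸ cos_le_cos_of_nonneg_of_le_pi (abs_nonneg x) ha h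

theorem Real.one_le_cos_div_cos {x a : ℝ} (h : |x| ≤ a) (ha : a < π / 2) : 1 ≤ cos x / cos a :=
  (one_le_div (cos_pos_of_mem_Ioo ⟨by linarith [abs_nonneg x], ha⟩)).2
    (cos_le_cos_of_abs_le h (by linarith [pi_pos]))

theorem Real.cos_div_cos_le_one_div_cos {a b : ℝ} (x : ℝ) (ha : 0 ≤ a) (hab : a ≤ b)
    (hb : b < π / 2) : cos x / cos a ≤ 1 / cos b :=
  div_le_div₀ zero_le_one (cos_le_one x) (cos_pos_of_mem_Ioo ⟨by linarith, hb⟩)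
    (cos_le_cos_of_nonneg_of_le_pi ha (by linarith [pi_pos]) hab)

theorem Real.one_div_cos_half_lt_sqrt_two : 1 / cos (1 / 2) < √2 := by
  have hcos : cos (π / 4) < cos (1 / 2) :=
    cos_lt_cos_of_nonneg_of_le_pi (by norm_num) (by linarith [pi_gt_three])
      (by linarith [pi_gt_three])
  rw [cos_pi_div_four] at hcos
  rw [div_lt_iff₀ (by linarith [sqrt_nonneg 2])]
  nlinarith [sq_sqrt (zero_le_two : (0 : ℝ) ≤ 2), sqrt_nonneg 2]

theorem stmt_2_general (n : ℕ) (θ : ℝ) (hθ : θ ∈ Set.Ioo 0 (Real.pi / 2))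
    (hnθ : (n : ℝ) * θ ≤ 1) (φ : ℕ → ℝ)
    (hφ : ∀ k : ℕ, φ k =
      Real.sin ((k : ℝ) * θ + (Real.pi - (n : ℝ) * θ) / 2) / Real.cos ((n : ℝ) * θ / 2)) :
    (∀ k ≤ n, 1 ≤ φ k ∧ φ k ≤ 1 / Real.cos (1 / 2)) ∧
      (1 / Real.cos (1 / 2) < Real.sqrt 2) ∧
      (∀ k ≤ n, φ k = φ (n - k)) := by
  have hθ0 : 0 ≤ θ := hθ.1.le
  have hφ' : ∀ k : ℕ, φ k = cos (k * θ - n * θ / 2) / cos (n * θ / 2) := fun k => by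
    rw [hφ, sin_add_pi_sub_div_two]
  have hoffset : ∀ k ≤ n, |(k : ℝ) * θ - n * θ / 2| ≤ n * θ / 2 := fun k hk => by
    have : (k : ℝ) * θ ≤ n * θ := by gcongr
    exact abs_le.2 ⟨by linarith [mul_nonneg k.cast_nonneg hθ0], by linarith⟩
  have hhalf : (n : ℝ) * θ / 2 < π / 2 := by linarith [pi_gt_three]
  refine ⟨fun k hk => ⟨?_, ?_⟩, one_div_cos_half_lt_sqrt_two, fun k hk => ?_⟩
  · rw [hφ']
    exact one_le_cos_div_cos (hoffset k hk) hhalf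
  · rw [hφ']
    exact cos_div_cos_le_one_div_cos _ (by positivity) (by linarith) (by linarith [pi_gt_three])
  · rw [hφ', hφ', Nat.cast_sub hk, ← cos_neg]
    ring_nf

/-- The sine profile `φ k = sin(kθ + (π - nθ)/2)/cos(nθ/2)` on a subdivided edge
satisfies `1 ≤ φ k ≤ 1/cos(1/2) < √2` for `0 ≤ k ≤ n`, and `φ k = φ (n - k)`. -/
theorem stmt_2 (n : ℕ) (hn : 2 ≤ n) (θ : ℝ) (hθ : θ ∈ Set.Ioo 0 (Real.pi / 2))
    (hnθ : (n : ℝ) * θ ≤ 1) (φ : ℕ → ℝ)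
    (hφ : ∀ k : ℕ, φ k =
      Real.sin ((k : ℝ) * θ + (Real.pi - (n : ℝ) * θ) / 2) / Real.cos ((n : ℝ) * θ / 2)) :
    (∀ k ≤ n, 1 ≤ φ k ∧ φ k ≤ 1 / Real.cos (1 / 2)) ∧
      (1 / Real.cos (1 / 2) < Real.sqrt 2) ∧
      (∀ k ≤ n, φ k = φ (n - k)) :=
  stmt_2_general n θ hθ hnθ φ hφ
end

section
/- Let (V_o, w_o, μ_o) be a locally finite connected weighted graph with adapted weight σ_o : E_o → (0,1], and let (V, w, μ) be its modification with subdivision weight 𝔫 : E_o → ℕ, 𝔫 ≥ 2 (each edge e of E_o is replaced by a path of 𝔫(e) new edges with weights w = 𝔫(e)·w_o(e), new vertex measures μ(x_i^e) = 2 w_o(e) σ_o(e)²/𝔫(e), and μ restricted to V_o equals μ_o). Then the function σ defined by σ(x_i^e, x_{i+1}^e) = σ_o(e)/𝔫(e) is an adapted weight for (V, w, μ), i.e. σ takes values in (0,1] and (1/μ(x))·Σ_{y ~ x} w(x,y)σ(x,y)² ≤ 1 for all x ∈ V. -/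
/-!
Along the subdivision of an edge `e`, each new edge contributes
`𝔫(e) w_o(e) (σ_o(e)/𝔫(e))² = w_o(e) σ_o(e)² / 𝔫(e)` to the adaptedness sums. A new vertex has at
most two neighbours, so its sum is at most `2 w_o(e) σ_o(e)² / 𝔫(e)`, which is its measure. The new
neighbours of an old vertex `x` correspond bijectively (thanks to the orientation) to its old
neighbours `y`, and the contribution `w_o(x,y) σ_o(x,y)² / 𝔫(x,y)` of the one on `xy` is at most
the term `w_o(x,y) σ_o(x,y)²` of the original sum at `x`, which is at most `μ_o(x)`.
-/

open Classical in
/-- The new vertices of the modification: `(a, b, i)` with `(a,b)` an oriented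
edge (i.e. `(a,b) ∈ Ep` and `w_o a b > 0`) and `1 ≤ i ≤ 𝔫(a,b) - 1`. -/
def NewV {Vo : Type*} (wo : Vo → Vo → ℝ) (n : Vo → Vo → ℕ) (Ep : Set (Vo × Vo)) : Type _ :=
  {p : Vo × Vo × ℕ //
    (p.1, p.2.1) ∈ Ep ∧ 0 < wo p.1 p.2.1 ∧ 1 ≤ p.2.2 ∧ p.2.2 ≤ n p.1 p.2.1 - 1}

/-- The vertex set of the modified graph: old vertices together with the new
subdivision vertices. -/
abbrev MV {Vo : Type*} (wo : Vo → Vo → ℝ) (n : Vo → Vo → ℕ) (Ep : Set (Vo × Vo)) : Type _ :=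
  Vo ⊕ NewV wo n Ep

open Classical in
/-- The edge weights of the modified graph: each oriented edge `e = (a,b)` is
subdivided into the path `a = x₀ᵉ ~ x₁ᵉ ~ ⋯ ~ x_{𝔫(e)}ᵉ = b`, and all the new
edges along `e` carry the weight `𝔫(e)·w_o(e)`. -/
noncomputable def mw {Vo : Type*} (wo : Vo → Vo → ℝ) (n : Vo → Vo → ℕ) (Ep : Set (Vo × Vo)) :
    MV wo n Ep → MV wo n Ep → ℝ
  | Sum.inl _, Sum.inl _ => 0
  | Sum.inl x, Sum.inr p =>
      if (x = p.val.1 ∧ p.val.2.2 = 1) ∨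
          (x = p.val.2.1 ∧ p.val.2.2 = n p.val.1 p.val.2.1 - 1)
      then (n p.val.1 p.val.2.1 : ℝ) * wo p.val.1 p.val.2.1 else 0
  | Sum.inr p, Sum.inl x =>
      if (x = p.val.1 ∧ p.val.2.2 = 1) ∨
          (x = p.val.2.1 ∧ p.val.2.2 = n p.val.1 p.val.2.1 - 1)
      then (n p.val.1 p.val.2.1 : ℝ) * wo p.val.1 p.val.2.1 else 0
  | Sum.inr p, Sum.inr q =>
      if p.val.1 = q.val.1 ∧ p.val.2.1 = q.val.2.1 ∧
          (p.val.2.2 = q.val.2.2 + 1 ∨ q.val.2.2 = p.val.2.2 + 1)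
      then (n p.val.1 p.val.2.1 : ℝ) * wo p.val.1 p.val.2.1 else 0

open Classical in
/-- The adapted weight of the modified graph: each new edge along the
subdivision of `e` has weight `σ_o(e)/𝔫(e)`. -/
noncomputable def mσ {Vo : Type*} (wo σo : Vo → Vo → ℝ) (n : Vo → Vo → ℕ)
    (Ep : Set (Vo × Vo)) : MV wo n Ep → MV wo n Ep → ℝ
  | Sum.inl _, Sum.inl _ => 0
  | Sum.inl x, Sum.inr p =>
      if (x = p.val.1 ∧ p.val.2.2 = 1) ∨
          (x = p.val.2.1 ∧ p.val.2.2 = n p.val.1 p.val.2.1 - 1)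
      then σo p.val.1 p.val.2.1 / (n p.val.1 p.val.2.1 : ℝ) else 0
  | Sum.inr p, Sum.inl x =>
      if (x = p.val.1 ∧ p.val.2.2 = 1) ∨
          (x = p.val.2.1 ∧ p.val.2.2 = n p.val.1 p.val.2.1 - 1)
      then σo p.val.1 p.val.2.1 / (n p.val.1 p.val.2.1 : ℝ) else 0
  | Sum.inr p, Sum.inr q =>
      if p.val.1 = q.val.1 ∧ p.val.2.1 = q.val.2.1 ∧
          (p.val.2.2 = q.val.2.2 + 1 ∨ q.val.2.2 = p.val.2.2 + 1)
      then σo p.val.1 p.val.2.1 / (n p.val.1 p.val.2.1 : ℝ) else 0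

/-- The vertex measure of the modified graph: old vertices keep their measure,
and each new vertex on the subdivision of `e` has measure `2·w_o(e)·σ_o(e)²/𝔫(e)`. -/
noncomputable def mμ {Vo : Type*} (wo σo : Vo → Vo → ℝ) (μo : Vo → ℝ)
    (n : Vo → Vo → ℕ) (Ep : Set (Vo × Vo)) : MV wo n Ep → ℝ
  | Sum.inl x => μo x
  | Sum.inr p => 2 * wo p.val.1 p.val.2.1 * σo p.val.1 p.val.2.1 ^ 2 / (n p.val.1 p.val.2.1 : ℝ)


open Function

theorem tsum_le_two_mul_of_support_subset_pair {α : Type*} {f : α → ℝ} {t : ℝ} (u v : α)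
    (hft : ∀ a, f a ≤ t) (ht : 0 ≤ t) (hsupp : ∀ a, f a ≠ 0 → a = u ∨ a = v) :
    ∑' a, f a ≤ 2 * t := by
  classical
  have hzero : ∀ a ∉ ({u, v} : Finset α), f a = 0 := fun a ha => by
    by_contra hfa
    rcases hsupp a hfa with rfl | rfl <;> simp at ha
  calc ∑' a, f a = ∑ a ∈ {u, v}, f a := tsum_eq_sum hzero
    _ ≤ ({u, v} : Finset α).card • t := Finset.sum_le_card_nsmul _ _ _ fun a _ => hft a
    _ ≤ 2 * t := by
      rw [nsmul_eq_mul]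
      exact mul_le_mul_of_nonneg_right (by exact_mod_cast Finset.card_le_two) ht

theorem natCast_mul_mul_div_sq (k : ℕ) (w s : ℝ) : k * w * (s / k) ^ 2 = w * s ^ 2 / k := by
  rcases eq_or_ne (k : ℝ) 0 with hk | hk
  · simp [hk]
  · field_simp

section Modification

variable {Vo : Type*} {wo : Vo → Vo → ℝ} (σo : Vo → Vo → ℝ) {n : Vo → Vo → ℕ}
  {Ep : Set (Vo × Vo)}

theorem mσ_comm (p q : MV wo n Ep) : mσ wo σo n Ep p q = mσ wo σo n Ep q p := by
  rcases p with x | p <;> rcases q with y | q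
  · rfl
  all_goals simp only [mσ]
  by_cases h : p.val.1 = q.val.1 ∧ p.val.2.1 = q.val.2.1 ∧
      (p.val.2.2 = q.val.2.2 + 1 ∨ q.val.2.2 = p.val.2.2 + 1)
  · rw [if_pos h, if_pos ⟨h.1.symm, h.2.1.symm, h.2.2.symm⟩, h.1, h.2.1]
  · rw [if_neg h, if_neg fun h' => h ⟨h'.1.symm, h'.2.1.symm, h'.2.2.symm⟩]

theorem exists_mσ_eq_of_mw_pos {p q : MV wo n Ep} (h : 0 < mw wo n Ep p q) :
    ∃ a b, 0 < wo a b ∧ mσ wo σo n Ep p q = σo a b / n a b := by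
  rcases p with x | p <;> rcases q with y | q <;> simp only [mw, mσ] at h ⊢ <;>
    (try split_ifs at h ⊢) <;>
    first
    | exact (lt_irrefl _ h).elim
    | exact ⟨_, _, q.2.2.1, rfl⟩
    | exact ⟨_, _, p.2.2.1, rfl⟩

open Classical in
theorem mσ_pos_and_le_one_of_mw_pos (hσo_edge : ∀ x y, 0 < wo x y → 0 < σo x y ∧ σo x y ≤ 1)
    (hn2 : ∀ x y, 0 < wo x y → 2 ≤ n x y) {p q : MV wo n Ep} (h : 0 < mw wo n Ep p q) :
    0 < mσ wo σo n Ep p q ∧ mσ wo σo n Ep p q ≤ 1 := by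
  obtain ⟨a, b, hab, hσ⟩ := exists_mσ_eq_of_mw_pos σo h
  obtain ⟨hσ_pos, hσ_le⟩ := hσo_edge a b hab
  have hn : (1 : ℝ) ≤ n a b := by exact_mod_cast (hn2 a b hab).trans' one_le_two
  rw [hσ]
  exact ⟨div_pos hσ_pos (one_pos.trans_le hn), div_le_one_of_le₀ (hσ_le.trans hn) (by positivity)⟩

open Classical in
theorem mw_mul_mσ_sq_inl_inr (x : Vo) (r : NewV wo n Ep) :
    mw wo n Ep (.inl x) (.inr r) * mσ wo σo n Ep (.inl x) (.inr r) ^ 2 =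
      if (x = r.val.1 ∧ r.val.2.2 = 1) ∨ (x = r.val.2.1 ∧ r.val.2.2 = n r.val.1 r.val.2.1 - 1)
      then wo r.val.1 r.val.2.1 * σo r.val.1 r.val.2.1 ^ 2 / n r.val.1 r.val.2.1 else 0 := by
  simp only [mw, mσ]
  split_ifs
  · exact natCast_mul_mul_div_sq _ _ _
  · simp

open Classical in
variable (n Ep) in
/-- The new vertex adjacent to `x` on the subdivided edge `xy`: in the encoding `(a, b, i)` of
`NewV`, it is `(x, y, 1)` if the edge is oriented from `x`, and `(y, x, 𝔫 - 1)` otherwise. -/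
noncomputable def nearVertex (x y : Vo) : Vo × Vo × ℕ :=
  if (x, y) ∈ Ep then (x, y, 1) else (y, x, n y x - 1)

theorem nearVertex_injective (x : Vo) : Injective (nearVertex n Ep x) := by
  intro y y' h
  unfold nearVertex at h
  split_ifs at h <;> simp only [Prod.mk.injEq] at h <;> grind

theorem nearVertex_mem (hwo_symm : ∀ x y, wo x y = wo y x)
    (hn2 : ∀ x y, 0 < wo x y → 2 ≤ n x y)
    (hEp_orient : ∀ x y, 0 < wo x y → Xor ((x, y) ∈ Ep) ((y, x) ∈ Ep)) {x y : Vo}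
    (hxy : 0 < wo x y) :
    nearVertex n Ep x y ∈ {p : Vo × Vo × ℕ |
      (p.1, p.2.1) ∈ Ep ∧ 0 < wo p.1 p.2.1 ∧ 1 ≤ p.2.2 ∧ p.2.2 ≤ n p.1 p.2.1 - 1} := by
  have hyx : 0 < wo y x := hwo_symm x y ▸ hxy
  have := hn2 x y hxy
  have := hn2 y x hyx
  unfold nearVertex
  split_ifs with hE <;> simp only [Set.mem_ofPred_eq]
  · exact ⟨hE, hxy, le_rfl, by omega⟩
  · exact ⟨(Xor.or (hEp_orient x y hxy)).resolve_left hE, hyx, by omega, le_rfl⟩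

theorem exists_nearVertex_eq (hEp_orient : ∀ x y, 0 < wo x y → Xor ((x, y) ∈ Ep) ((y, x) ∈ Ep))
    (hwo_symm : ∀ x y, wo x y = wo y x) {x a b : Vo} {i : ℕ} (hE : (a, b) ∈ Ep)
    (hw : 0 < wo a b) (hr : (x = a ∧ i = 1) ∨ (x = b ∧ i = n a b - 1)) :
    ∃ y, 0 < wo x y ∧ nearVertex n Ep x y = (a, b, i) := by
  rcases hr with ⟨rfl, rfl⟩ | ⟨rfl, rfl⟩
  · exact ⟨b, hw, if_pos hE⟩
  · refine ⟨a, hwo_symm a x ▸ hw, if_neg fun hxa => ?_⟩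
    rcases hEp_orient a x hw with ⟨-, h⟩ | ⟨-, h⟩
    exacts [h hxa, h hE]

theorem mw_mul_mσ_sq_inl_le (hwo_symm : ∀ x y, wo x y = wo y x) (hwo_nonneg : ∀ x y, 0 ≤ wo x y)
    (hσo_symm : ∀ x y, σo x y = σo y x) {x y : Vo} :
    ∀ r : NewV wo n Ep, r.val = nearVertex n Ep x y →
      mw wo n Ep (.inl x) (.inr r) * mσ wo σo n Ep (.inl x) (.inr r) ^ 2 ≤ wo x y * σo x y ^ 2 := by
  intro r hr
  obtain ⟨-, -, hi1, hi2⟩ := r.2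
  have hn : (1 : ℝ) ≤ n r.val.1 r.val.2.1 := by exact_mod_cast (by omega : 1 ≤ n r.val.1 r.val.2.1)
  rw [mw_mul_mσ_sq_inl_inr]
  unfold nearVertex at hr
  split_ifs at hr <;> rw [hr] at hn ⊢
  · rw [if_pos (Or.inl ⟨rfl, rfl⟩)]
    exact div_le_self (mul_nonneg (hwo_nonneg _ _) (sq_nonneg _)) hn
  · rw [if_pos (Or.inr ⟨rfl, rfl⟩), hwo_symm, hσo_symm]
    exact div_le_self (mul_nonneg (hwo_nonneg _ _) (sq_nonneg _)) hn

theorem tsum_mw_mul_mσ_sq_inl_le (hwo_symm : ∀ x y, wo x y = wo y x)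
    (hwo_nonneg : ∀ x y, 0 ≤ wo x y) (hσo_symm : ∀ x y, σo x y = σo y x)
    (hn2 : ∀ x y, 0 < wo x y → 2 ≤ n x y)
    (hEp_orient : ∀ x y, 0 < wo x y → Xor ((x, y) ∈ Ep) ((y, x) ∈ Ep))
    {x : Vo} (hloc : {y | 0 < wo x y}.Finite) :
    ∑' q, mw wo n Ep (.inl x) q * mσ wo σo n Ep (.inl x) q ^ 2 ≤ ∑' y, wo x y * σo x y ^ 2 := by
  have : Finite {y | 0 < wo x y} := hloc.to_subtype
  let ψ : {y | 0 < wo x y} → MV wo n Ep := fun y =>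
    .inr ⟨nearVertex n Ep x y, nearVertex_mem hwo_symm hn2 hEp_orient y.2⟩
  have hψ : Injective ψ := fun y y' h =>
    Subtype.ext (nearVertex_injective x (congrArg Subtype.val (Sum.inr_injective h)))
  have hsupp : support (fun q => mw wo n Ep (.inl x) q * mσ wo σo n Ep (.inl x) q ^ 2) ⊆
      Set.range ψ := by
    rintro (y | r) hr
    · simp [mw] at hr
    · rw [mem_support, mw_mul_mσ_sq_inl_inr] at hr
      obtain ⟨y, hy, hyr⟩ := exists_nearVertex_eq hEp_orient hwo_symm r.2.1 r.2.2.1 (by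
        by_contra h
        exact hr (if_neg h))
      exact ⟨⟨y, hy⟩, congrArg Sum.inr (Subtype.ext hyr)⟩
  have hg : support (fun y => wo x y * σo x y ^ 2) ⊆ {y | 0 < wo x y} := fun y hy =>
    (hwo_nonneg x y).lt_of_ne' (left_ne_zero_of_mul hy)
  calc ∑' q, mw wo n Ep (.inl x) q * mσ wo σo n Ep (.inl x) q ^ 2
      = ∑' y, mw wo n Ep (.inl x) (ψ y) * mσ wo σo n Ep (.inl x) (ψ y) ^ 2 :=
        (hψ.tsum_eq hsupp).symm
    _ ≤ ∑' y : {y | 0 < wo x y}, wo x y * σo x y ^ 2 :=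
        Summable.tsum_le_tsum (fun y => mw_mul_mσ_sq_inl_le σo hwo_symm hwo_nonneg hσo_symm _ rfl)
          .of_finite .of_finite
    _ = ∑' y, wo x y * σo x y ^ 2 := tsum_subtype_eq_of_support_subset hg

def NewV.next (p : NewV wo n Ep) : MV wo n Ep :=
  if h : p.val.2.2 + 1 ≤ n p.val.1 p.val.2.1 - 1 then
    .inr ⟨(p.val.1, p.val.2.1, p.val.2.2 + 1), p.2.1, p.2.2.1, Nat.le_add_left 1 _, h⟩
  else .inl p.val.2.1

def NewV.prev (p : NewV wo n Ep) : MV wo n Ep :=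
  if h : 2 ≤ p.val.2.2 then
    .inr ⟨(p.val.1, p.val.2.1, p.val.2.2 - 1), p.2.1, p.2.2.1, Nat.le_sub_of_add_le h,
      (Nat.sub_le _ _).trans p.2.2.2.2⟩
  else .inl p.val.1

theorem eq_next_or_eq_prev_of_mw_ne_zero {p : NewV wo n Ep} {q : MV wo n Ep}
    (h : mw wo n Ep (.inr p) q ≠ 0) : q = p.next ∨ q = p.prev := by
  obtain ⟨-, -, hi1, hi2⟩ := p.2
  rcases q with y | q <;> simp only [mw] at h <;> split_ifs at h with hc <;> try exact absurd rfl h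
  · rcases hc with ⟨rfl, hi⟩ | ⟨rfl, hi⟩
    · right
      unfold NewV.prev
      rw [dif_neg (by omega)]
    · left
      unfold NewV.next
      rw [dif_neg (by omega)]
  · obtain ⟨ha, hb, hi | hi⟩ := hc <;> obtain ⟨-, -, hj1, hj2⟩ := q.2 <;> rw [← ha, ← hb] at hj2
    · right
      unfold NewV.prev
      rw [dif_pos (by omega)]
      exact congrArg Sum.inr
        (Subtype.ext (Prod.ext ha.symm (Prod.ext hb.symm (by simp only; omega))))
    · left
      unfold NewV.next
      rw [dif_pos (by omega)]
      exact congrArg Sum.inr (Subtype.ext (Prod.ext ha.symm (Prod.ext hb.symm hi)))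

theorem mw_mul_mσ_sq_inr_le (hwo_nonneg : ∀ x y, 0 ≤ wo x y) (p : NewV wo n Ep) (q : MV wo n Ep) :
    mw wo n Ep (.inr p) q * mσ wo σo n Ep (.inr p) q ^ 2 ≤
      wo p.val.1 p.val.2.1 * σo p.val.1 p.val.2.1 ^ 2 / n p.val.1 p.val.2.1 := by
  have h0 : 0 ≤ wo p.val.1 p.val.2.1 * σo p.val.1 p.val.2.1 ^ 2 / n p.val.1 p.val.2.1 :=
    div_nonneg (mul_nonneg (hwo_nonneg _ _) (sq_nonneg _)) (Nat.cast_nonneg _)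
  rcases q with y | q <;> simp only [mw, mσ] <;> split_ifs <;>
    first
    | exact (natCast_mul_mul_div_sq _ _ _).le
    | simpa using h0

theorem tsum_mw_mul_mσ_sq_inr_le (μo : Vo → ℝ) (hwo_nonneg : ∀ x y, 0 ≤ wo x y)
    (p : NewV wo n Ep) :
    ∑' q, mw wo n Ep (.inr p) q * mσ wo σo n Ep (.inr p) q ^ 2 ≤ mμ wo σo μo n Ep (.inr p) := by
  calc ∑' q, mw wo n Ep (.inr p) q * mσ wo σo n Ep (.inr p) q ^ 2
      ≤ 2 * (wo p.val.1 p.val.2.1 * σo p.val.1 p.val.2.1 ^ 2 / n p.val.1 p.val.2.1) :=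
        tsum_le_two_mul_of_support_subset_pair p.next p.prev
          (mw_mul_mσ_sq_inr_le σo hwo_nonneg p)
          (div_nonneg (mul_nonneg (hwo_nonneg _ _) (sq_nonneg _)) (Nat.cast_nonneg _))
          fun q hq => eq_next_or_eq_prev_of_mw_ne_zero (left_ne_zero_of_mul hq)
    _ = mμ wo σo μo n Ep (.inr p) := by simp only [mμ]; ring

end Modification

theorem stmt_6_general {Vo : Type*} (wo σo : Vo → Vo → ℝ) (μo : Vo → ℝ)
    (n : Vo → Vo → ℕ) (Ep : Set (Vo × Vo))
    (hwo_symm : ∀ x y, wo x y = wo y x) (hwo_nonneg : ∀ x y, 0 ≤ wo x y)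
    (hloc : ∀ x, {y | 0 < wo x y}.Finite)
    (hσo_symm : ∀ x y, σo x y = σo y x)
    (hσo_edge : ∀ x y, 0 < wo x y → 0 < σo x y ∧ σo x y ≤ 1)
    (hadapt : ∀ x, ∑' y, wo x y * σo x y ^ 2 ≤ μo x)
    (hn2 : ∀ x y, 0 < wo x y → 2 ≤ n x y)
    (hEp_orient : ∀ x y, 0 < wo x y → Xor' ((x, y) ∈ Ep) ((y, x) ∈ Ep))
    :
    (∀ p q : MV wo n Ep, mσ wo σo n Ep p q = mσ wo σo n Ep q p) ∧
    (∀ p q : MV wo n Ep, 0 < mw wo n Ep p q →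
      0 < mσ wo σo n Ep p q ∧ mσ wo σo n Ep p q ≤ 1) ∧
    (∀ p : MV wo n Ep,
      ∑' q : MV wo n Ep, mw wo n Ep p q * mσ wo σo n Ep p q ^ 2 ≤ mμ wo σo μo n Ep p) := by
  refine ⟨mσ_comm σo, fun p q => mσ_pos_and_le_one_of_mw_pos σo hσo_edge hn2, ?_⟩
  rintro (x | p)
  · exact (tsum_mw_mul_mσ_sq_inl_le σo hwo_symm hwo_nonneg hσo_symm hn2 hEp_orient
      (hloc x)).trans (hadapt x)
  · exact tsum_mw_mul_mσ_sq_inr_le σo μo hwo_nonneg p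

/-- The weight `σ(xᵢᵉ, xᵢ₊₁ᵉ) = σ_o(e)/𝔫(e)` is an adapted weight for the
modified weighted graph: it is symmetric, takes values in `(0,1]` on edges, and
satisfies `(1/μ(x))·Σ_y w(x,y)σ(x,y)² ≤ 1` at every vertex. -/
theorem stmt_6 {Vo : Type*} (wo σo : Vo → Vo → ℝ) (μo : Vo → ℝ)
    (n : Vo → Vo → ℕ) (Ep : Set (Vo × Vo))
    (hwo_symm : ∀ x y, wo x y = wo y x) (hwo_nonneg : ∀ x y, 0 ≤ wo x y)
    (hμo_pos : ∀ x, 0 < μo x)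
    (hloc : ∀ x, {y | 0 < wo x y}.Finite)
    (hσo_symm : ∀ x y, σo x y = σo y x)
    (hσo_edge : ∀ x y, 0 < wo x y → 0 < σo x y ∧ σo x y ≤ 1)
    (hadapt : ∀ x, ∑' y, wo x y * σo x y ^ 2 ≤ μo x)
    (hn_symm : ∀ x y, n x y = n y x) (hn2 : ∀ x y, 0 < wo x y → 2 ≤ n x y)
    (hEp_edge : ∀ p ∈ Ep, 0 < wo p.1 p.2)
    (hEp_orient : ∀ x y, 0 < wo x y → Xor' ((x, y) ∈ Ep) ((y, x) ∈ Ep))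
    :
    (∀ p q : MV wo n Ep, mσ wo σo n Ep p q = mσ wo σo n Ep q p) ∧
    (∀ p q : MV wo n Ep, 0 < mw wo n Ep p q →
      0 < mσ wo σo n Ep p q ∧ mσ wo σo n Ep p q ≤ 1) ∧
    (∀ p : MV wo n Ep,
      ∑' q : MV wo n Ep, mw wo n Ep p q * mσ wo σo n Ep p q ^ 2 ≤ mμ wo σo μo n Ep p) :=
  stmt_6_general wo σo μo n Ep hwo_symm hwo_nonneg hloc hσo_symm hσo_edge hadapt hn2 hEp_orient
end

section
/- With the modification construction as above, the adapted path metric d_σ of the modified graph restricted to V_o × V_o equals the adapted path metric d_{σ_o} of the original graph: d_σ(x,y) = d_{σ_o}(x,y) for all x, y ∈ V_o. -/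
/-- The sum of `σ`-weights along consecutive pairs of a list of vertices. -/
def chainSum {V : Type*} (σ : V → V → ℝ) : List V → ℝ
  | a :: b :: l => σ a b + chainSum σ (b :: l)
  | _ => 0

/-- `l` is a path from `x` to `y` in the graph whose edges are the pairs of
positive weight. -/
def isPath {V : Type*} (w : V → V → ℝ) (x y : V) (l : List V) : Prop :=
  l.head? = some x ∧ l.getLast? = some y ∧ l.Chain' (fun a b => 0 < w a b)

/-- The adapted path (pseudo-)metric: the infimum of `σ`-lengths of paths from
`x` to `y`. -/
noncomputable def dPath {V : Type*} (w σ : V → V → ℝ) (x y : V) : ℝ :=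
  sInf {s : ℝ | ∃ l : List V, isPath w x y l ∧ s = chainSum σ l}

/-!
A path of the subdivided graph between original vertices is no shorter than some path of the
original graph: extend `d_{σ_o}(x, ·)` to the interior vertex `(a, b, i)` of the subdivided edge
`(a, b)` by `min (d(x, a) + i σ_o(a,b)/𝔫) (d(x, b) + (𝔫 - i) σ_o(a,b)/𝔫)`. By the triangle inequality
for `d_{σ_o}` along the edge, this potential grows by at most `σ` along every new edge, hence
bounds `d_σ(x, ·)` from below. Conversely, each original edge `e` is traversed by its `𝔫(e)`
subdivision edges at total length `σ_o(e)`, so every original path lifts to one of the same length.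
-/

section Paths

variable {V : Type*} {w σ : V → V → ℝ}

lemma isPath_iff {x y : V} {l : List V} :
    isPath w x y l ↔ l.head? = some x ∧ l.getLast? = some y ∧ l.IsChain (fun a b => 0 < w a b) :=
  Iff.rfl

@[simp] lemma chainSum_singleton (a : V) : chainSum σ [a] = 0 := rfl

@[simp] lemma chainSum_cons_cons (a b : V) (l : List V) :
    chainSum σ (a :: b :: l) = σ a b + chainSum σ (b :: l) := rfl

@[simp] lemma not_isPath_nil (x y : V) : ¬ isPath w x y [] := by simp [isPath_iff]

@[simp] lemma isPath_singleton {x y a : V} : isPath w x y [a] ↔ x = a ∧ y = a := by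
  simp [isPath_iff, eq_comm]

lemma isPath_cons_cons {x y a b : V} {l : List V} :
    isPath w x y (a :: b :: l) ↔ x = a ∧ 0 < w a b ∧ isPath w b y (b :: l) := by
  simp only [isPath_iff, List.head?_cons, Option.some.injEq, List.getLast?_cons_cons,
    List.isChain_cons_cons, true_and]
  tauto

lemma isPath_pair {a b : V} (h : 0 < w a b) : isPath w a b [a, b] :=
  isPath_cons_cons.2 ⟨rfl, h, isPath_singleton.2 ⟨rfl, rfl⟩⟩

lemma isPath.eq_cons {x y : V} {l : List V} (h : isPath w x y l) : l = x :: l.tail := by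
  obtain ⟨hx, -, -⟩ := isPath_iff.1 h
  cases l with
  | nil => simp at hx
  | cons a l => simp_all

lemma isPath.append {x v y : V} {L₁ L₂ : List V} (h₁ : isPath w x v L₁) (h₂ : isPath w v y L₂) :
    isPath w x y (L₁ ++ L₂.tail) ∧ chainSum σ (L₁ ++ L₂.tail) = chainSum σ L₁ + chainSum σ L₂ := by
  match L₁, h₁ with
  | [], h₁ => exact absurd h₁ (not_isPath_nil _ _)
  | [_], h₁ =>
    obtain ⟨rfl, rfl⟩ := isPath_singleton.1 h₁
    rw [List.singleton_append, ← h₂.eq_cons]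
    exact ⟨h₂, by simp⟩
  | _ :: _ :: _, h₁ =>
    obtain ⟨rfl, hab, h₁⟩ := isPath_cons_cons.1 h₁
    obtain ⟨hpath, hsum⟩ := h₁.append h₂
    refine ⟨isPath_cons_cons.2 ⟨rfl, hab, hpath⟩, ?_⟩
    simp only [List.cons_append, chainSum_cons_cons] at hsum ⊢
    rw [hsum, add_assoc]

lemma isPath.reverse (hw : ∀ a b, w a b = w b a) {x y : V} {l : List V} (h : isPath w x y l) :
    isPath w y x l.reverse := by
  obtain ⟨hx, hy, hc⟩ := isPath_iff.1 h
  refine isPath_iff.2 ⟨by rwa [List.head?_reverse], by rwa [List.getLast?_reverse], ?_⟩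
  rw [List.isChain_reverse]
  exact hc.imp fun a b hab => by rwa [hw]

lemma chainSum_append_pair : ∀ (l : List V) (a b : V),
    chainSum σ (l ++ [a, b]) = chainSum σ (l ++ [a]) + σ a b
  | [], _, _ => by simp
  | [_], _, _ => by simp
  | c :: d :: l, a, b => by
    have := chainSum_append_pair (d :: l) a b
    simp only [List.cons_append, chainSum_cons_cons] at this ⊢
    rw [this, add_assoc]

lemma chainSum_reverse (hσ : ∀ a b, σ a b = σ b a) : ∀ l : List V, chainSum σ l.reverse = chainSum σ l
  | [] | [_] => rfl
  | a :: b :: l => by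
    have := chainSum_reverse hσ (b :: l)
    rw [List.reverse_cons, List.reverse_cons, List.append_assoc, List.singleton_append,
      chainSum_append_pair, ← List.reverse_cons, this, chainSum_cons_cons, hσ, add_comm]

lemma le_add_chainSum (f : V → ℝ) (hf : ∀ a b, 0 < w a b → f b ≤ f a + σ a b) :
    ∀ {x y : V} {l : List V}, isPath w x y l → f y ≤ f x + chainSum σ l
  | _, _, [], h => absurd h (not_isPath_nil _ _)
  | _, _, [_], h => by obtain ⟨rfl, rfl⟩ := isPath_singleton.1 h; simp
  | _, _, _ :: _ :: _, h => by
    obtain ⟨rfl, hab, h⟩ := isPath_cons_cons.1 h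
    have := le_add_chainSum f hf h
    have := hf _ _ hab
    simp only [chainSum_cons_cons]
    linarith

end Paths

section PathMetric

variable {V : Type*} {w σ : V → V → ℝ}

lemma isPath.chainSum_nonneg (hσ : ∀ a b, 0 < w a b → 0 ≤ σ a b) {x y : V} {l : List V}
    (h : isPath w x y l) : 0 ≤ chainSum σ l := by
  simpa using le_add_chainSum (fun _ => 0) (fun a b hab => by simpa using hσ a b hab) h

lemma dPath_le (hσ : ∀ a b, 0 < w a b → 0 ≤ σ a b) {x y : V} {l : List V}
    (h : isPath w x y l) : dPath w σ x y ≤ chainSum σ l :=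
  csInf_le ⟨0, by rintro _ ⟨l, hl, rfl⟩; exact hl.chainSum_nonneg hσ⟩ ⟨l, h, rfl⟩

lemma le_dPath {x y : V} (hne : ∃ l, isPath w x y l) {c : ℝ}
    (h : ∀ l, isPath w x y l → c ≤ chainSum σ l) : c ≤ dPath w σ x y := by
  obtain ⟨l, hl⟩ := hne
  exact le_csInf ⟨_, l, hl, rfl⟩ (by rintro _ ⟨l, hl, rfl⟩; exact h l hl)

lemma dPath_self_nonpos (hσ : ∀ a b, 0 < w a b → 0 ≤ σ a b) (x : V) : dPath w σ x x ≤ 0 :=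
  dPath_le hσ (isPath_singleton.2 ⟨rfl, rfl⟩)

lemma dPath_le_add (hσ : ∀ a b, 0 < w a b → 0 ≤ σ a b) {x a b : V} (hne : ∃ l, isPath w x a l)
    (hab : 0 < w a b) : dPath w σ x b ≤ dPath w σ x a + σ a b := by
  suffices dPath w σ x b - σ a b ≤ dPath w σ x a by linarith
  refine le_dPath hne fun l hl => ?_
  obtain ⟨hpath, hsum⟩ := hl.append (σ := σ) (isPath_pair hab)
  have := dPath_le hσ hpath
  simp only [hsum, chainSum_cons_cons, chainSum_singleton] at this
  linarith

lemma sub_le_dPath (F : V → ℝ) (hF : ∀ a b, 0 < w a b → F b ≤ F a + σ a b) {x y : V}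
    (hne : ∃ l, isPath w x y l) : F y - F x ≤ dPath w σ x y :=
  le_dPath hne fun _ hl => by linarith [le_add_chainSum F hF hl]

variable {V' : Type*} {w' σ' : V' → V' → ℝ}

lemma exists_isPath_chainSum_eq_of_edges (φ : V → V')
    (hstep : ∀ a b, 0 < w a b → ∃ L, isPath w' (φ a) (φ b) L ∧ chainSum σ' L = σ a b) :
    ∀ {x y : V} {l : List V}, isPath w x y l →
      ∃ L, isPath w' (φ x) (φ y) L ∧ chainSum σ' L = chainSum σ l
  | _, _, [], h => absurd h (not_isPath_nil _ _)
  | _, _, [_], h => by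
    obtain ⟨rfl, rfl⟩ := isPath_singleton.1 h
    exact ⟨[φ _], isPath_singleton.2 ⟨rfl, rfl⟩, rfl⟩
  | _, _, _ :: b :: l, h => by
    obtain ⟨rfl, hab, h⟩ := isPath_cons_cons.1 h
    obtain ⟨L₁, hL₁, hs₁⟩ := hstep _ b hab
    obtain ⟨L₂, hL₂, hs₂⟩ := exists_isPath_chainSum_eq_of_edges φ hstep h
    obtain ⟨hpath, hsum⟩ := hL₁.append (σ := σ') hL₂
    exact ⟨_, hpath, by rw [hsum, hs₁, hs₂, chainSum_cons_cons]⟩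

lemma dPath_le_dPath_of_lift (hσ' : ∀ a b, 0 < w' a b → 0 ≤ σ' a b) {x y : V} {x' y' : V'}
    (hne : ∃ l, isPath w x y l)
    (hlift : ∀ l, isPath w x y l → ∃ L, isPath w' x' y' L ∧ chainSum σ' L = chainSum σ l) :
    dPath w' σ' x' y' ≤ dPath w σ x y :=
  le_dPath hne fun l hl => by
    obtain ⟨L, hL, hs⟩ := hlift l hl
    exact hs ▸ dPath_le hσ' hL

end PathMetric

section Subdivision

variable {Vo : Type*} {wo σo : Vo → Vo → ℝ} {n : Vo → Vo → ℕ} {Ep : Set (Vo × Vo)}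

lemma mw_symm (X Y : MV wo n Ep) : mw wo n Ep X Y = mw wo n Ep Y X := by
  rcases X with x | ⟨⟨a, b, i⟩, hp⟩ <;> rcases Y with y | ⟨⟨a', b', j⟩, hq⟩ <;> simp only [mw]
  split_ifs <;> grind

lemma mσ_symm (X Y : MV wo n Ep) : mσ wo σo n Ep X Y = mσ wo σo n Ep Y X := by
  rcases X with x | ⟨⟨a, b, i⟩, hp⟩ <;> rcases Y with y | ⟨⟨a', b', j⟩, hq⟩ <;> simp only [mσ]
  split_ifs <;> grind

lemma mσ_nonneg (hσo : ∀ a b, 0 < wo a b → 0 ≤ σo a b) (X Y : MV wo n Ep) :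
    0 ≤ mσ wo σo n Ep X Y := by
  have hdiv : ∀ p : NewV wo n Ep, 0 ≤ σo p.val.1 p.val.2.1 / n p.val.1 p.val.2.1 := fun p =>
    div_nonneg (hσo _ _ p.2.2.1) (Nat.cast_nonneg _)
  rcases X with x | p <;> rcases Y with y | q <;> simp only [mσ] <;>
    (try split_ifs) <;> first | exact le_rfl | exact hdiv _

def newVertex {a b : Vo} (hE : (a, b) ∈ Ep) (hw : 0 < wo a b) (i : ℕ)
    (hi : 1 ≤ i ∧ i ≤ n a b - 1) : NewV wo n Ep :=
  ⟨(a, b, i), hE, hw, hi⟩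

variable (σo) in
lemma exists_isPath_to_newVertex {a b : Vo} (hE : (a, b) ∈ Ep) (hw : 0 < wo a b) :
    ∀ i (hi : 1 ≤ i ∧ i ≤ n a b - 1),
      ∃ L, isPath (mw wo n Ep) (.inl a) (.inr (newVertex hE hw i hi)) L ∧
        chainSum (mσ wo σo n Ep) L = i * (σo a b / n a b)
  | 0, hi => absurd hi.1 (by omega)
  | 1, hi => by
    have hstep : 0 < mw wo n Ep (.inl a) (.inr (newVertex hE hw 1 hi)) := by
      simpa [mw, newVertex] using mul_pos (Nat.cast_pos.2 (by omega)) hw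
    exact ⟨_, isPath_pair hstep, by simp [mσ, newVertex]⟩
  | i + 2, hi => by
    have hi' : 1 ≤ i + 1 ∧ i + 1 ≤ n a b - 1 := ⟨by omega, by omega⟩
    have hstep : 0 < mw wo n Ep (.inr (newVertex hE hw (i + 1) hi'))
        (.inr (newVertex hE hw (i + 2) hi)) := by
      simpa [mw, newVertex] using mul_pos (Nat.cast_pos.2 (by omega)) hw
    have hlen : mσ wo σo n Ep (.inr (newVertex hE hw (i + 1) hi'))
        (.inr (newVertex hE hw (i + 2) hi)) = σo a b / n a b := by
      simp [mσ, newVertex]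
    obtain ⟨L, hL, hs⟩ := exists_isPath_to_newVertex hE hw (i + 1) hi'
    obtain ⟨hpath, hsum⟩ := hL.append (σ := mσ wo σo n Ep) (isPath_pair hstep)
    refine ⟨_, hpath, ?_⟩
    rw [hsum, hs, chainSum_cons_cons, chainSum_singleton, hlen]
    push_cast
    ring

variable (σo) in
lemma exists_isPath_of_mem {a b : Vo} (hE : (a, b) ∈ Ep) (hw : 0 < wo a b) (hn : 2 ≤ n a b) :
    ∃ L, isPath (mw wo n Ep) (.inl a) (.inl b) L ∧ chainSum (mσ wo σo n Ep) L = σo a b := by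
  have hi : 1 ≤ n a b - 1 ∧ n a b - 1 ≤ n a b - 1 := ⟨by omega, le_rfl⟩
  have hstep : 0 < mw wo n Ep (.inr (newVertex hE hw (n a b - 1) hi)) (.inl b) := by
    simpa [mw, newVertex] using mul_pos (Nat.cast_pos.2 (by omega)) hw
  have hlen : mσ wo σo n Ep (.inr (newVertex hE hw (n a b - 1) hi)) (.inl b) =
      σo a b / n a b := by
    simp [mσ, newVertex]
  obtain ⟨L, hL, hs⟩ := exists_isPath_to_newVertex σo hE hw _ hi
  obtain ⟨hpath, hsum⟩ := hL.append (σ := mσ wo σo n Ep) (isPath_pair hstep)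
  refine ⟨_, hpath, ?_⟩
  have hn0 : (n a b : ℝ) ≠ 0 := by norm_cast; omega
  rw [hsum, hs, chainSum_cons_cons, chainSum_singleton, hlen, Nat.cast_sub (by omega),
    Nat.cast_one]
  field_simp
  ring

lemma exists_isPath_of_pos (hwo : ∀ a b, wo a b = wo b a) (hσo : ∀ a b, σo a b = σo b a)
    (hn : ∀ a b, 0 < wo a b → 2 ≤ n a b)
    (hEp : ∀ a b, 0 < wo a b → (a, b) ∈ Ep ∨ (b, a) ∈ Ep) {a b : Vo} (hw : 0 < wo a b) :
    ∃ L, isPath (mw wo n Ep) (.inl a) (.inl b) L ∧ chainSum (mσ wo σo n Ep) L = σo a b := by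
  rcases hEp a b hw with hE | hE
  · exact exists_isPath_of_mem σo hE hw (hn a b hw)
  · have hw' : 0 < wo b a := hwo a b ▸ hw
    obtain ⟨L, hL, hs⟩ := exists_isPath_of_mem σo hE hw' (hn b a hw')
    exact ⟨L.reverse, hL.reverse mw_symm, by rw [chainSum_reverse mσ_symm, hs, hσo]⟩

end Subdivision

section Extension

variable {Vo : Type*} {wo : Vo → Vo → ℝ} {n : Vo → Vo → ℕ} {Ep : Set (Vo × Vo)}

variable (σo : Vo → Vo → ℝ) in
noncomputable def subdivExtension (f : Vo → ℝ) : MV wo n Ep → ℝ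
  | .inl v => f v
  | .inr ⟨(a, b, i), _⟩ => min (f a + i * (σo a b / n a b)) (f b + (n a b - i) * (σo a b / n a b))

lemma min_add_mul_le_min_add_mul_add {A B N s x y : ℝ} (hs : 0 ≤ s) (hyx : y ≤ x + 1)
    (hxy : x ≤ y + 1) :
    min (A + y * s) (B + (N - y) * s) ≤ min (A + x * s) (B + (N - x) * s) + s := by
  rw [← min_add_add_right]
  exact min_le_min (by nlinarith) (by nlinarith)

lemma subdivExtension_le_add {σo : Vo → Vo → ℝ} (hwo : ∀ a b, wo a b = wo b a)
    (hσo : ∀ a b, σo a b = σo b a) (hσo_nonneg : ∀ a b, 0 < wo a b → 0 ≤ σo a b)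
    {f : Vo → ℝ} (hf : ∀ a b, 0 < wo a b → f b ≤ f a + σo a b) (X Y : MV wo n Ep)
    (hXY : 0 < mw wo n Ep X Y) :
    subdivExtension σo f Y ≤ subdivExtension σo f X + mσ wo σo n Ep X Y := by
  have edge : ∀ {a b : Vo} {i : ℕ}, 0 < wo a b → 1 ≤ i → i ≤ n a b - 1 →
      0 ≤ σo a b / n a b ∧ n a b * (σo a b / n a b) = σo a b ∧
        f b ≤ f a + σo a b ∧ f a ≤ f b + σo a b ∧ ((n a b - 1 : ℕ) : ℝ) = n a b - 1 :=
    fun {a b i} hw hi1 hin => by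
      have hn : (n a b : ℝ) ≠ 0 := by norm_cast; omega
      refine ⟨div_nonneg (hσo_nonneg a b hw) (Nat.cast_nonneg _), by field_simp, hf a b hw,
        hσo a b ▸ hf b a (hwo a b ▸ hw), by rw [Nat.cast_sub (by omega), Nat.cast_one]⟩
  rcases X with u | ⟨⟨a, b, i⟩, hE, hw, hi1, hin⟩ <;>
    rcases Y with v | ⟨⟨a', b', j⟩, hE', hw', hj1, hjn⟩ <;>
    simp only [mw, mσ, subdivExtension] at hXY ⊢
  · exact absurd hXY (lt_irrefl 0)
  all_goals split_ifs at hXY ⊢ with hc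
  any_goals exact absurd hXY (lt_irrefl 0)
  · obtain ⟨-, -, -, -, hcast⟩ := edge hw' hj1 hjn
    rcases hc with ⟨rfl, rfl⟩ | ⟨rfl, rfl⟩
    · exact min_le_left _ _ |>.trans (by simp)
    · exact min_le_right _ _ |>.trans (by rw [hcast]; linarith)
  · obtain ⟨hs, hns, hab, hba, hcast⟩ := edge hw hi1 hin
    rw [← min_add_add_right]
    rcases hc with ⟨rfl, rfl⟩ | ⟨rfl, rfl⟩
    · rw [Nat.cast_one]
      exact le_min (by linarith) (by linarith)
    · rw [hcast]
      exact le_min (by linarith) (by linarith)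
  · obtain ⟨rfl, rfl, hij⟩ := hc
    obtain ⟨hs, -⟩ := edge hw hi1 hin
    exact min_add_mul_le_min_add_mul_add hs (by norm_cast; omega) (by norm_cast; omega)

end Extension

theorem stmt_7_general {Vo : Type*} (wo σo : Vo → Vo → ℝ)
    (n : Vo → Vo → ℕ) (Ep : Set (Vo × Vo))
    (hwo_symm : ∀ x y, wo x y = wo y x)
    (hσo_symm : ∀ x y, σo x y = σo y x)
    (hσo_edge : ∀ x y, 0 < wo x y → 0 < σo x y ∧ σo x y ≤ 1)
    (hn2 : ∀ x y, 0 < wo x y → 2 ≤ n x y)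
    (hEp_orient : ∀ x y, 0 < wo x y → Xor' ((x, y) ∈ Ep) ((y, x) ∈ Ep))
    (hconn : ∀ x y : Vo, ∃ l : List Vo, isPath wo x y l) :
    ∀ x y : Vo,
      dPath (mw wo n Ep) (mσ wo σo n Ep) (Sum.inl x) (Sum.inl y) = dPath wo σo x y := by
  intro x y
  have hσo : ∀ a b, 0 < wo a b → 0 ≤ σo a b := fun a b h => (hσo_edge a b h).1.le
  have hlift : ∀ {u v : Vo} {l : List Vo}, isPath wo u v l →
      ∃ L, isPath (mw wo n Ep) (.inl u) (.inl v) L ∧ chainSum (mσ wo σo n Ep) L = chainSum σo l :=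
    exists_isPath_chainSum_eq_of_edges Sum.inl fun a b hab =>
      exists_isPath_of_pos hwo_symm hσo_symm hn2 (fun a b h => Xor.or (hEp_orient a b h)) hab
  refine le_antisymm (dPath_le_dPath_of_lift (fun X Y _ => mσ_nonneg hσo X Y) (hconn x y)
    fun _ => hlift) ?_
  have hdist : ∀ a b, 0 < wo a b → dPath wo σo x b ≤ dPath wo σo x a + σo a b :=
    fun a b hab => dPath_le_add hσo (hconn x a) hab
  obtain ⟨L, hL, -⟩ := hlift (hconn x y).choose_spec
  have hlower : dPath wo σo x y - dPath wo σo x x ≤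
      dPath (mw wo n Ep) (mσ wo σo n Ep) (Sum.inl x) (Sum.inl y) :=
    sub_le_dPath (subdivExtension σo (dPath wo σo x))
      (subdivExtension_le_add hwo_symm hσo_symm hσo hdist) ⟨L, hL⟩
  linarith [dPath_self_nonpos hσo x]

/-- The adapted path metric of the modified graph, restricted to the original
vertex set, coincides with the adapted path metric of the original graph:
`d_σ(x, y) = d_{σ_o}(x, y)` for all `x, y ∈ V_o`. -/
theorem stmt_7 {Vo : Type*} (wo σo : Vo → Vo → ℝ) (μo : Vo → ℝ)
    (n : Vo → Vo → ℕ) (Ep : Set (Vo × Vo))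
    (hwo_symm : ∀ x y, wo x y = wo y x) (hwo_nonneg : ∀ x y, 0 ≤ wo x y)
    (hμo_pos : ∀ x, 0 < μo x)
    (hloc : ∀ x, {y | 0 < wo x y}.Finite)
    (hσo_symm : ∀ x y, σo x y = σo y x)
    (hσo_edge : ∀ x y, 0 < wo x y → 0 < σo x y ∧ σo x y ≤ 1)
    (hadapt : ∀ x, ∑' y, wo x y * σo x y ^ 2 ≤ μo x)
    (hn_symm : ∀ x y, n x y = n y x) (hn2 : ∀ x y, 0 < wo x y → 2 ≤ n x y)
    (hEp_edge : ∀ p ∈ Ep, 0 < wo p.1 p.2)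
    (hEp_orient : ∀ x y, 0 < wo x y → Xor' ((x, y) ∈ Ep) ((y, x) ∈ Ep))
    (hconn : ∀ x y : Vo, ∃ l : List Vo, isPath wo x y l) :
    ∀ x y : Vo,
      dPath (mw wo n Ep) (mσ wo σo n Ep) (Sum.inl x) (Sum.inl y) = dPath wo σo x y :=
  stmt_7_general wo σo n Ep hwo_symm hσo_symm hσo_edge hn2 hEp_orient hconn
end
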